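/- There exists a sequence (B_n)_{n∈ℕ} of pairwise disjoint subsets of ℕ, each a finite union of infinite arithmetic progressions with bd*(B_n) > 0, such that Σ_{n∈ℕ} bd*(B_n) ≤ 1/4 while bd*(⋃_{n∈ℕ} B_n) ≥ 1/2. In particular, the upper Banach density bd* restricted to the sets of positive upper Banach density is not σ-subadditive. -/

import Mathlib

open Filter Topology

/-- The upper Banach density `bd*(A) = lim_n max_k |A ∩ [k, k+n)| / n`, which exists and
equals `inf_{n ≥ 1} sup_k |A ∩ [k, k+n)| / n`. -/
noncomputable def upperBanachDensity (A : Set ℕ) : ℝ :=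
  ⨅ n : ℕ, ⨆ k : ℕ, ((A ∩ Set.Ico k (k + (n + 1))).ncard : ℝ) / (n + 1)

/-- `X` is a finite union of infinite arithmetic progressions `k·ℕ + h` (`k ≠ 0`). -/
def IsFinUnionAP (X : Set ℕ) : Prop :=
  ∃ s : Finset (ℕ × ℕ), (∀ p ∈ s, p.1 ≠ 0) ∧
    X = ⋃ p ∈ s, Set.range (fun n : ℕ => p.1 * n + p.2)

/-! ### Auxiliary construction -/

private def mseq (n : ℕ) : ℕ := 8 ^ (2 * n + 3)
private def Lseq (n : ℕ) : ℕ := 8 ^ n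

private def newAt : ℕ → ℕ → Prop
  | n, x => x % mseq n < Lseq n ∧ ∀ m, m < n → ¬ newAt m x

private lemma newAt_iff (n x : ℕ) :
    newAt n x ↔ (x % mseq n < Lseq n ∧ ∀ m, m < n → ¬ newAt m x) := by
  rw [newAt]

private lemma mpos (n : ℕ) : 0 < mseq n := Nat.pow_pos (by norm_num)
private lemma Lpos (n : ℕ) : 0 < Lseq n := Nat.pow_pos (by norm_num)
private lemma L_le_m (n : ℕ) : Lseq n ≤ mseq n :=
  Nat.pow_le_pow_right (by norm_num) (by omega)
private lemma m_dvd (m n : ℕ) (h : m ≤ n) : mseq m ∣ mseq n := pow_dvd_pow _ (by omega)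

private lemma newAt_congr : ∀ j x y, x % mseq j = y % mseq j → (newAt j x → newAt j y) := by
  intro j
  induction j using Nat.strong_induction_on with
  | _ j ih =>
    intro x y hxy hx
    rw [newAt_iff] at hx ⊢
    refine ⟨hxy ▸ hx.1, fun m hm hy => ?_⟩
    have hmod : y % mseq m = x % mseq m := by
      rw [← Nat.mod_mod_of_dvd x (m_dvd m j hm.le), ← Nat.mod_mod_of_dvd y (m_dvd m j hm.le), hxy]
    exact hx.2 m hm (ih m hm y x hmod hy)

private lemma newAt_iff_mod (j x y : ℕ) (h : x % mseq j = y % mseq j) :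
    (newAt j x ↔ newAt j y) :=
  ⟨newAt_congr j x y h, newAt_congr j y x h.symm⟩

private lemma point_mem (n : ℕ) : newAt n (8 ^ n - 1) := by
  rw [newAt_iff]
  constructor
  · have h1 : 8 ^ n - 1 < Lseq n := by
      have := Lpos n; unfold Lseq at *; omega
    have : (8 ^ n - 1) % mseq n = 8 ^ n - 1 :=
      Nat.mod_eq_of_lt (lt_of_lt_of_le h1 (L_le_m n))
    omega
  · intro m hm hmem
    rw [newAt_iff] at hmem
    have key : Lseq m ≤ (8 ^ n - 1) % mseq m := by
      show (8:ℕ) ^ m ≤ (8 ^ n - 1) % 8 ^ (2 * m + 3)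
      set d : ℕ := 8 ^ (2 * m + 3) with hd
      have hdpos : 0 < d := by positivity
      have hLd : (8:ℕ) ^ m < d := Nat.pow_lt_pow_right (by norm_num) (by omega)
      by_cases hc : 2 * m + 3 ≤ n
      · obtain ⟨k, hk⟩ : d ∣ 8 ^ n := pow_dvd_pow _ hc
        have hnpos : 0 < (8:ℕ) ^ n := by positivity
        have hk1 : 1 ≤ k := by
          rcases Nat.eq_zero_or_pos k with h0 | h1
          · rw [h0, mul_zero] at hk; omega
          · exact h1
        obtain ⟨k', rfl⟩ : ∃ k', k = k' + 1 := ⟨k - 1, by omega⟩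
        have hsplit : 8 ^ n - 1 = d * k' + (d - 1) := by
          rw [hk, Nat.mul_succ]; omega
        rw [hsplit, Nat.mul_add_mod, Nat.mod_eq_of_lt (by omega)]
        omega
      · have hle : (8:ℕ) ^ n ≤ d := Nat.pow_le_pow_right (by norm_num) (by omega)
        have hmn : (8:ℕ) ^ (m + 1) ≤ 8 ^ n := Nat.pow_le_pow_right (by norm_num) (by omega)
        have h8 : (8:ℕ) ^ m < 8 ^ (m + 1) := Nat.pow_lt_pow_right (by norm_num) (by omega)
        have hnpos : 0 < (8:ℕ) ^ n := by positivity
        rw [Nat.mod_eq_of_lt (by omega)]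
        omega
    omega

private lemma chunk_subset (N x : ℕ) (hx : x < Lseq N) : ∃ j ≤ N, newAt j x := by
  by_cases h : ∃ m < N, newAt m x
  · obtain ⟨m, hm, hmem⟩ := h; exact ⟨m, hm.le, hmem⟩
  · push_neg at h
    refine ⟨N, le_rfl, ?_⟩
    rw [newAt_iff]
    exact ⟨by rw [Nat.mod_eq_of_lt (lt_of_lt_of_le hx (L_le_m N))]; exact hx, h⟩

/-! ### Generic density lemmas -/

private lemma ncard_Ico' (a b : ℕ) : (Set.Ico a b).ncard = b - a := by
  rw [Set.ncard_eq_toFinset_card']; simp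

private lemma ncard_Iio' (q : ℕ) : (Set.Iio q).ncard = q := by
  rw [Set.ncard_eq_toFinset_card']; simp

private lemma ncard_window_le (A : Set ℕ) (k t : ℕ) : (A ∩ Set.Ico k (k + t)).ncard ≤ t := by
  have h := Set.ncard_le_ncard (Set.inter_subset_right (s := A) (t := Set.Ico k (k+t)))
    (Set.finite_Ico k (k+t))
  rw [ncard_Ico'] at h; omega

private lemma term_nonneg (A : Set ℕ) (n k : ℕ) :
    0 ≤ ((A ∩ Set.Ico k (k + (n + 1))).ncard : ℝ) / (n + 1) := by positivity

private lemma term_le_one (A : Set ℕ) (n k : ℕ) :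
    ((A ∩ Set.Ico k (k + (n + 1))).ncard : ℝ) / (n + 1) ≤ 1 := by
  rw [div_le_one (by positivity)]
  have := ncard_window_le A k (n+1)
  exact_mod_cast Nat.cast_le.mpr this |>.trans_eq (by push_cast; ring)

private lemma bdd_above_terms (A : Set ℕ) (n : ℕ) :
    BddAbove (Set.range fun k => ((A ∩ Set.Ico k (k + (n + 1))).ncard : ℝ) / (n + 1)) :=
  ⟨1, by rintro x ⟨k, rfl⟩; exact term_le_one A n k⟩

private lemma sup_nonneg' (A : Set ℕ) (n : ℕ) :
    0 ≤ ⨆ k : ℕ, ((A ∩ Set.Ico k (k + (n + 1))).ncard : ℝ) / (n + 1) :=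
  le_ciSup_of_le (bdd_above_terms A n) 0 (term_nonneg A n 0)

private lemma bdd_below_sups (A : Set ℕ) :
    BddBelow (Set.range fun n => ⨆ k : ℕ, ((A ∩ Set.Ico k (k + (n + 1))).ncard : ℝ) / (n + 1)) :=
  ⟨0, by rintro x ⟨n, rfl⟩; exact sup_nonneg' A n⟩

private lemma ubd_nonneg (A : Set ℕ) : 0 ≤ upperBanachDensity A :=
  le_ciInf fun n => sup_nonneg' A n

private lemma ubd_le (A : Set ℕ) (m : ℕ) (hm : 1 ≤ m) (C : ℝ)
    (h : ∀ k, ((A ∩ Set.Ico k (k + m)).ncard : ℝ) ≤ C) :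
    upperBanachDensity A ≤ C / m := by
  refine ciInf_le_of_le (bdd_below_sups A) (m - 1) ?_
  have hm1 : m - 1 + 1 = m := by omega
  rw [hm1]
  have hcast : ((m - 1 : ℕ) : ℝ) + 1 = (m : ℝ) := by
    have : ((m - 1 : ℕ) : ℝ) = (m : ℝ) - 1 := by
      push_cast [Nat.cast_sub hm]; ring
    rw [this]; ring
  rw [hcast]
  exact ciSup_le fun k => by
    have := h k
    gcongr

private lemma ubd_ge (A : Set ℕ) (c : ℝ)
    (h : ∀ n : ℕ, ∃ k : ℕ, c ≤ ((A ∩ Set.Ico k (k + (n + 1))).ncard : ℝ) / (n + 1)) :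
    c ≤ upperBanachDensity A := by
  refine le_ciInf fun n => ?_
  obtain ⟨k, hk⟩ := h n
  exact hk.trans (le_ciSup (bdd_above_terms A n) k)

private lemma ubd_ge_of_AP (A : Set ℕ) (p m : ℕ) (hm : 1 ≤ m)
    (h : ∀ i : ℕ, p + i * m ∈ A) :
    1 / (m : ℝ) ≤ upperBanachDensity A := by
  apply ubd_ge
  intro n
  refine ⟨p, ?_⟩
  set q : ℕ := n / m + 1 with hq
  have hsub : (fun i => p + i * m) '' Set.Iio q ⊆ A ∩ Set.Ico p (p + (n + 1)) := by
    rintro x ⟨i, hi, rfl⟩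
    simp only [Set.mem_Iio] at hi
    dsimp only
    refine ⟨h i, le_add_right le_rfl, ?_⟩
    have : i * m ≤ (n / m) * m := Nat.mul_le_mul_right m (by omega)
    have h2 : n / m * m ≤ n := Nat.div_mul_le_self n m
    omega
  have hinj : Function.Injective (fun i : ℕ => p + i * m) := by
    intro a b hab
    simp only at hab
    exact Nat.eq_of_mul_eq_mul_right hm (by omega : a * m = b * m)
  have hcard : ((fun i => p + i * m) '' Set.Iio q).ncard = q := by
    rw [Set.ncard_image_of_injective _ hinj, ncard_Iio']
  have hfin : (A ∩ Set.Ico p (p + (n + 1))).Finite :=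
    Set.Finite.subset (Set.finite_Ico _ _) Set.inter_subset_right
  have hle : q ≤ (A ∩ Set.Ico p (p + (n + 1))).ncard := by
    rw [← hcard]; exact Set.ncard_le_ncard hsub hfin
  have hqm : n + 1 ≤ q * m := by
    have hd := Nat.div_add_mod n m
    have hr : n % m < m := Nat.mod_lt _ (by omega)
    have h2 : q * m = m * (n / m) + m := by rw [hq]; ring
    omega
  rw [div_le_div_iff₀ (by positivity) (by positivity)]
  calc (1 : ℝ) * (n + 1) = (n + 1 : ℕ) := by push_cast; ring
    _ ≤ (q * m : ℕ) := by exact_mod_cast hqm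
    _ ≤ ((A ∩ Set.Ico p (p + (n + 1))).ncard : ℝ) * m := by
        push_cast; exact mul_le_mul_of_nonneg_right (by exact_mod_cast hle) (by positivity)

private lemma mod_injOn (m k : ℕ) (hm : 0 < m) :
    Set.InjOn (· % m) (Set.Ico k (k + m)) := by
  intro x hx y hy hxy
  simp only [Set.mem_Ico] at hx hy
  rcases le_total x y with hle | hle
  · have hdvd : m ∣ y - x := (Nat.modEq_iff_dvd' hle).mp hxy
    rcases Nat.eq_zero_or_pos (y - x) with h0 | h1
    · omega
    · have := Nat.le_of_dvd h1 hdvd; omega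
  · have hdvd : m ∣ x - y := (Nat.modEq_iff_dvd' hle).mp hxy.symm
    rcases Nat.eq_zero_or_pos (x - y) with h0 | h1
    · omega
    · have := Nat.le_of_dvd h1 hdvd; omega

/-! ### The sets Bₙ -/

private def Bset (n : ℕ) : Set ℕ := {x | newAt n x}

private lemma Bset_window_le (j k : ℕ) :
    (Bset j ∩ Set.Ico k (k + mseq j)).ncard ≤ Lseq j := by
  have hinj : Set.InjOn (· % mseq j) (Bset j ∩ Set.Ico k (k + mseq j)) :=
    (mod_injOn (mseq j) k (mpos j)).mono Set.inter_subset_right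
  have himg : (· % mseq j) '' (Bset j ∩ Set.Ico k (k + mseq j)) ⊆ Set.Iio (Lseq j) := by
    rintro r ⟨x, ⟨hxB, _⟩, rfl⟩
    exact ((newAt_iff j x).mp hxB).1
  calc (Bset j ∩ Set.Ico k (k + mseq j)).ncard
      = ((· % mseq j) '' (Bset j ∩ Set.Ico k (k + mseq j))).ncard :=
        (Set.ncard_image_of_injOn hinj).symm
    _ ≤ (Set.Iio (Lseq j)).ncard := Set.ncard_le_ncard himg (Set.finite_Iio _)
    _ = Lseq j := ncard_Iio' _

private lemma ubd_Bset_le (j : ℕ) :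
    upperBanachDensity (Bset j) ≤ (Lseq j : ℝ) / (mseq j : ℝ) :=
  ubd_le _ (mseq j) (mpos j) _ (fun k => by exact_mod_cast Bset_window_le j k)

private lemma ubd_Bset_pos (j : ℕ) : 0 < upperBanachDensity (Bset j) := by
  have h : ∀ i : ℕ, 8 ^ j - 1 + i * mseq j ∈ Bset j := by
    intro i
    have hmod : (8 ^ j - 1 + i * mseq j) % mseq j = (8 ^ j - 1) % mseq j :=
      Nat.add_mul_mod_self_right _ _ _
    exact (newAt_iff_mod j _ _ hmod).mpr (point_mem j)
  have := ubd_ge_of_AP (Bset j) (8 ^ j - 1) (mseq j) (mpos j) h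
  have hpos : (0:ℝ) < 1 / (mseq j : ℝ) := by
    have := mpos j; positivity
  linarith

private lemma Bset_bound (j : ℕ) :
    upperBanachDensity (Bset j) ≤ (1/8 : ℝ) ^ j * (1/512) := by
  refine (ubd_Bset_le j).trans ?_
  have hm : (mseq j : ℝ) = (Lseq j : ℝ) * 8 ^ (j + 3) := by
    unfold mseq Lseq
    push_cast
    rw [← pow_add]
    ring_nf
  have hL : (0:ℝ) < (Lseq j : ℝ) := by exact_mod_cast Lpos j
  rw [hm, div_mul_eq_div_div, div_self hL.ne']
  apply le_of_eq
  rw [div_pow, one_pow, div_mul_div_comm, one_mul, pow_add]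
  norm_num

private lemma Bset_finUnionAP (j : ℕ) : IsFinUnionAP (Bset j) := by
  classical
  refine ⟨((Finset.range (mseq j)).filter (fun r => newAt j r)).image
    (fun r => (mseq j, r)), ?_, ?_⟩
  · intro p hp
    simp only [Finset.mem_image, Finset.mem_filter, Finset.mem_range] at hp
    obtain ⟨r, _, rfl⟩ := hp
    exact (mpos j).ne'
  · ext x
    simp only [Set.mem_iUnion, Finset.mem_image, Finset.mem_filter, Finset.mem_range,
      Set.mem_range, exists_prop]
    constructor
    · intro hx
      refine ⟨(mseq j, x % mseq j), ⟨x % mseq j,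
        ⟨Nat.mod_lt _ (mpos j), ?_⟩, rfl⟩, x / mseq j, ?_⟩
      · exact (newAt_iff_mod j _ _ (Nat.mod_mod_of_dvd x dvd_rfl)).mpr hx
      · exact Nat.div_add_mod x (mseq j)
    · rintro ⟨p, ⟨r, ⟨hr, hnew⟩, rfl⟩, t, rfl⟩
      have hmod : (mseq j * t + r) % mseq j = r % mseq j := by
        simp [Nat.mul_add_mod]
      exact (newAt_iff_mod j _ _ hmod).mpr
        ((newAt_iff_mod j r r rfl).mpr hnew)

private lemma Bset_pairwise :
    Pairwise fun m n => Disjoint (Bset m) (Bset n) := by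
  have key : ∀ m n, m < n → Disjoint (Bset m) (Bset n) := by
    intro m n hmn
    rw [Set.disjoint_left]
    intro x hxm hxn
    exact ((newAt_iff n x).mp hxn).2 m hmn hxm
  intro m n hmn
  rcases hmn.lt_or_gt with h | h
  · exact key m n h
  · exact (key n m h).symm

private lemma ubd_union_ge : (1/2 : ℝ) ≤ upperBanachDensity (⋃ n : ℕ, Bset n) := by
  apply ubd_ge
  intro n
  refine ⟨0, ?_⟩
  have hsub : Set.Ico 0 (0 + (n + 1)) ⊆ ⋃ m : ℕ, Bset m := by
    intro x hx
    simp only [Set.mem_Ico, zero_add] at hx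
    have hxL : x < Lseq (n + 1) := by
      have h1 : n + 1 < 8 ^ (n + 1) := Nat.lt_pow_self (by norm_num)
      unfold Lseq
      omega
    obtain ⟨m, _, hm⟩ := chunk_subset (n + 1) x hxL
    exact Set.mem_iUnion.mpr ⟨m, hm⟩
  have heq : (⋃ m : ℕ, Bset m) ∩ Set.Ico 0 (0 + (n + 1)) = Set.Ico 0 (0 + (n + 1)) :=
    Set.inter_eq_self_of_subset_right hsub
  rw [heq, ncard_Ico']
  simp only [zero_add, Nat.sub_zero]
  have : ((n:ℝ) + 1) > 0 := by positivity
  rw [div_le_div_iff₀ (by norm_num) this]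
  push_cast
  linarith

/-- There is a sequence of pairwise disjoint sets `Bₙ`, each a finite union
of infinite arithmetic progressions with `bd*(Bₙ) > 0`, such that
`∑ bd*(Bₙ) ≤ 1/4` while `bd*(⋃ Bₙ) ≥ 1/2`; so `bd*` restricted to sets of positive
upper Banach density is not σ-subadditive. -/
theorem upperBanachDensity_not_sigma_subadditive :
    ∃ B : ℕ → Set ℕ,
      (Pairwise fun m n => Disjoint (B m) (B n)) ∧
      (∀ n, IsFinUnionAP (B n)) ∧
      (∀ n, 0 < upperBanachDensity (B n)) ∧
      Summable (fun n => upperBanachDensity (B n)) ∧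
      (∑' n : ℕ, upperBanachDensity (B n)) ≤ 1 / 4 ∧
      1 / 2 ≤ upperBanachDensity (⋃ n : ℕ, B n) := by
  have hgeom : Summable (fun n : ℕ => (1/8 : ℝ) ^ n * (1/512)) :=
    (summable_geometric_of_lt_one (by norm_num) (by norm_num)).mul_right _
  have hsummable : Summable (fun n => upperBanachDensity (Bset n)) :=
    Summable.of_nonneg_of_le (fun n => ubd_nonneg _) Bset_bound hgeom
  refine ⟨Bset, Bset_pairwise, Bset_finUnionAP, ubd_Bset_pos, hsummable, ?_, ubd_union_ge⟩
  calc (∑' n : ℕ, upperBanachDensity (Bset n))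
      ≤ ∑' n : ℕ, (1/8 : ℝ) ^ n * (1/512) := Summable.tsum_le_tsum Bset_bound hsummable hgeom
    _ = (1 - 1/8)⁻¹ * (1/512) := by rw [tsum_mul_right, tsum_geometric_of_lt_one (by norm_num) (by norm_num)]
    _ ≤ 1/4 := by norm_num
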